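/- For all m ≥ 0 and n ≥ 1, sum_{j=0}^{m} (-1)^{m+j} Ls(m,j) H_{2n+2j-1} = m! · sum_{j=0}^{n} (-1)^{n+j} LS(n,j) j! (j+m)!, where Ls and LS are the Legendre-Stirling numbers of the first and second kind respectively. -/
import Mathlib


/-- `F̃ 1 = 1`, `F̃_{n+1}(z) = z(z+1) F̃_n(z+1) - (z-1)z F̃_n(z)`. -/
def Ftilde : ℕ → ℚ → ℚ
  | 0, _ => 1
  | 1, _ => 1
  | n + 2, z => z * (z + 1) * Ftilde (n + 1) (z + 1) - (z - 1) * z * Ftilde (n + 1) z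

/-- Genocchi numbers of the second kind: `genocchiH n = H_{2n-1} = F̃_n(1)`. -/
def genocchiH (n : ℕ) : ℚ := Ftilde n 1

/-- Legendre-Stirling numbers of the first kind. -/
def legendreLs : ℕ → ℕ → ℚ
  | 0, 0 => 1
  | 0, _ + 1 => 0
  | _ + 1, 0 => 0
  | n + 1, j + 1 => legendreLs n j - (n : ℚ) * ((n : ℚ) + 1) * legendreLs n (j + 1)

/-- Legendre-Stirling numbers of the second kind. -/
def legendreLS : ℕ → ℕ → ℚ
  | 0, 0 => 1
  | 0, _ + 1 => 0
  | _ + 1, 0 => 0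
  | n + 1, j + 1 => legendreLS n j + ((j : ℚ) + 1) * ((j : ℚ) + 2) * legendreLS n (j + 1)

lemma legendreLS_zero_of_lt : ∀ n j : ℕ, legendreLS n (n + j + 1) = 0 := by
  intro n
  induction n with
  | zero => intro j; simp [legendreLS]
  | succ n ih =>
    intro j
    have h : n + 1 + j + 1 = (n + j + 1) + 1 := by omega
    rw [h]
    have e1 := ih j
    have e2 := ih (j + 1)
    rw [show n + (j + 1) + 1 = (n + j + 1) + 1 by omega] at e2
    show legendreLS n (n + j + 1) + _ * _ * legendreLS n (n + j + 1 + 1) = 0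
    rw [e1, e2]
    ring

lemma legendreLs_zero_of_lt : ∀ n j : ℕ, legendreLs n (n + j + 1) = 0 := by
  intro n
  induction n with
  | zero => intro j; simp [legendreLs]
  | succ n ih =>
    intro j
    have h : n + 1 + j + 1 = (n + j + 1) + 1 := by omega
    rw [h]
    have e1 := ih j
    have e2 := ih (j + 1)
    rw [show n + (j + 1) + 1 = (n + j + 1) + 1 by omega] at e2
    show legendreLs n (n + j + 1) - _ * _ * legendreLs n (n + j + 1 + 1) = 0
    rw [e1, e2]
    ring

/-- shifting a sum against a triangular array -/
lemma sum_shift (n : ℕ) (f L : ℕ → ℚ) (hL : L (n + 1) = 0) :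
    ∑ k ∈ Finset.range (n + 1), f (k + 1) * L (k + 1)
      = ∑ k ∈ Finset.range (n + 1), f k * L k - f 0 * L 0 := by
  have h1 := Finset.sum_range_succ' (fun k => f k * L k) (n + 1)
  have h2 := Finset.sum_range_succ (fun k => f k * L k) (n + 1)
  rw [hL, mul_zero, add_zero] at h2
  linarith

/-- The key lemma: the second-kind sum equals `(m+1)! F̃_n(m+1)`. -/
lemma S_lemma (n : ℕ) (hn : 1 ≤ n) : ∀ m : ℕ,
    ∑ j ∈ Finset.range (n + 1),
        (-1 : ℚ) ^ (n + j) * legendreLS n j * (j.factorial : ℚ) * ((j + m).factorial : ℚ)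
      = ((m + 1).factorial : ℚ) * Ftilde n ((m : ℚ) + 1) := by
  induction n, hn using Nat.le_induction with
  | base =>
    intro m
    have h1 : legendreLS 1 1 = 1 := by simp [legendreLS]
    simp [Finset.sum_range_succ, legendreLS, h1, Ftilde, Nat.add_comm 1 m]
  | succ n hn ih =>
    intro m
    obtain ⟨p, rfl⟩ : ∃ p, n = p + 1 := ⟨n - 1, by omega⟩
    rw [Finset.sum_range_succ']
    have hz : legendreLS (p + 1 + 1) 0 = 0 := rfl
    rw [hz]
    simp only [mul_zero, zero_mul, add_zero]
    have hshift := sum_shift (p + 1)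
      (fun j => (-1 : ℚ) ^ (p + 1 + j + 1) * ((j : ℕ) : ℚ) * (((j : ℕ) : ℚ) + 1) *
        ((j.factorial : ℕ) : ℚ) * (((j + m).factorial : ℕ) : ℚ))
      (fun j => legendreLS (p + 1) j) (legendreLS_zero_of_lt (p + 1) 0)
    have step1 : ∑ k ∈ Finset.range (p + 1 + 1),
        (-1 : ℚ) ^ (p + 1 + 1 + (k + 1)) * legendreLS (p + 1 + 1) (k + 1) *
          ((k + 1).factorial : ℚ) * ((k + 1 + m).factorial : ℚ)
        = (∑ k ∈ Finset.range (p + 1 + 1),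
            (-1 : ℚ) ^ (p + 1 + k) * legendreLS (p + 1) k *
              ((k + 1).factorial : ℚ) * ((k + 1 + m).factorial : ℚ))
          + ∑ k ∈ Finset.range (p + 1 + 1),
            (-1 : ℚ) ^ (p + 1 + (k + 1) + 1) * (((k + 1 : ℕ)) : ℚ) * ((((k + 1 : ℕ)) : ℚ) + 1) *
              (((k + 1).factorial : ℕ) : ℚ) * ((((k + 1) + m).factorial : ℕ) : ℚ) *
              legendreLS (p + 1) (k + 1) := by
      rw [← Finset.sum_add_distrib]
      apply Finset.sum_congr rfl
      intro k _
      have hrec : legendreLS (p + 1 + 1) (k + 1)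
          = legendreLS (p + 1) k + ((k : ℚ) + 1) * ((k : ℚ) + 2) * legendreLS (p + 1) (k + 1) := rfl
      rw [hrec]
      have hs1 : (-1 : ℚ) ^ (p + 1 + 1 + (k + 1)) = (-1) ^ (p + 1 + k) := by
        rw [show p + 1 + 1 + (k + 1) = (p + 1 + k) + 2 by omega, pow_add]; norm_num
      have hs2 : (-1 : ℚ) ^ (p + 1 + (k + 1) + 1) = (-1) ^ (p + 1 + k) := by
        rw [show p + 1 + (k + 1) + 1 = (p + 1 + k) + 2 by omega, pow_add]; norm_num
      rw [hs1, hs2]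
      push_cast
      ring
    rw [step1, hshift]
    have hf0 : (-1 : ℚ) ^ (p + 1 + 0 + 1) * ((0 : ℕ) : ℚ) * (((0 : ℕ) : ℚ) + 1) *
        ((Nat.factorial 0 : ℕ) : ℚ) * (((0 + m).factorial : ℕ) : ℚ) * legendreLS (p + 1) 0 = 0 := by
      norm_num
    rw [hf0, sub_zero]
    -- combine the two sums termwise
    have step2 : (∑ k ∈ Finset.range (p + 1 + 1),
          (-1 : ℚ) ^ (p + 1 + k) * legendreLS (p + 1) k *
            ((k + 1).factorial : ℚ) * ((k + 1 + m).factorial : ℚ))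
        + ∑ k ∈ Finset.range (p + 1 + 1),
          (-1 : ℚ) ^ (p + 1 + k + 1) * ((k : ℕ) : ℚ) * (((k : ℕ) : ℚ) + 1) *
            ((k.factorial : ℕ) : ℚ) * (((k + m).factorial : ℕ) : ℚ) * legendreLS (p + 1) k
        = ((m : ℚ) + 1) * (∑ j ∈ Finset.range (p + 1 + 1),
            (-1 : ℚ) ^ (p + 1 + j) * legendreLS (p + 1) j *
              (j.factorial : ℚ) * ((j + (m + 1)).factorial : ℚ))
          - (m : ℚ) * ((m : ℚ) + 1) * ∑ j ∈ Finset.range (p + 1 + 1),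
            (-1 : ℚ) ^ (p + 1 + j) * legendreLS (p + 1) j *
              (j.factorial : ℚ) * ((j + m).factorial : ℚ) := by
      rw [Finset.mul_sum, Finset.mul_sum, ← Finset.sum_sub_distrib, ← Finset.sum_add_distrib]
      apply Finset.sum_congr rfl
      intro k _
      have e1 : ((k + 1).factorial : ℚ) = ((k : ℚ) + 1) * (k.factorial : ℚ) := by
        rw [Nat.factorial_succ]; push_cast; ring
      have e2 : ((k + 1 + m).factorial : ℚ) = ((k : ℚ) + (m : ℚ) + 1) * ((k + m).factorial : ℚ) := by
        rw [show k + 1 + m = (k + m) + 1 by omega, Nat.factorial_succ]; push_cast; ring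
      have e3 : ((k + (m + 1)).factorial : ℚ) = ((k : ℚ) + (m : ℚ) + 1) * ((k + m).factorial : ℚ) := by
        rw [show k + (m + 1) = (k + m) + 1 by omega, Nat.factorial_succ]; push_cast; ring
      rw [e1, e2, e3, pow_succ]
      ring
    rw [step2, ih m, ih (m + 1)]
    -- now unfold Ftilde (p+2)
    have hF : Ftilde (p + 1 + 1) ((m : ℚ) + 1)
        = ((m : ℚ) + 1) * (((m : ℚ) + 1) + 1) * Ftilde (p + 1) (((m : ℚ) + 1) + 1)
          - (((m : ℚ) + 1) - 1) * ((m : ℚ) + 1) * Ftilde (p + 1) ((m : ℚ) + 1) := rfl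
    rw [hF]
    have e4 : ((m + 1 + 1).factorial : ℚ) = ((m : ℚ) + 2) * ((m + 1).factorial : ℚ) := by
      rw [Nat.factorial_succ]; push_cast; ring
    have e6 : (((m + 1 : ℕ)) : ℚ) = (m : ℚ) + 1 := by push_cast; ring
    rw [e6, e4]
    ring

lemma mul_legendreLs_zero (m : ℕ) : (m : ℚ) * legendreLs m 0 = 0 := by
  rcases m with _ | m
  · simp
  · simp [legendreLs]

/-- The first-kind sum also equals `m!(m+1)! F̃_n(m+1)`. -/
lemma A_lemma (m : ℕ) : ∀ n : ℕ, 1 ≤ n →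
    ∑ j ∈ Finset.range (m + 1), (-1 : ℚ) ^ (m + j) * legendreLs m j * genocchiH (n + j)
      = (m.factorial : ℚ) * ((m + 1).factorial : ℚ) * Ftilde n ((m : ℚ) + 1) := by
  induction m with
  | zero =>
    intro n hn
    simp [legendreLs, genocchiH]
  | succ m ih =>
    intro n hn
    rw [Finset.sum_range_succ']
    have hz : legendreLs (m + 1) 0 = 0 := rfl
    rw [hz]
    simp only [mul_zero, zero_mul, add_zero]
    have hshift := sum_shift m
      (fun j => (-1 : ℚ) ^ (m + j + 1) * genocchiH (n + j))
      (fun j => legendreLs m j) (legendreLs_zero_of_lt m 0)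
    have step1 : ∑ k ∈ Finset.range (m + 1),
        (-1 : ℚ) ^ (m + 1 + (k + 1)) * legendreLs (m + 1) (k + 1) * genocchiH (n + (k + 1))
        = (∑ k ∈ Finset.range (m + 1),
            (-1 : ℚ) ^ (m + k) * legendreLs m k * genocchiH (n + 1 + k))
          - (m : ℚ) * ((m : ℚ) + 1) * ∑ k ∈ Finset.range (m + 1),
            (-1 : ℚ) ^ (m + (k + 1) + 1) * genocchiH (n + (k + 1)) * legendreLs m (k + 1) := by
      rw [Finset.mul_sum, ← Finset.sum_sub_distrib]
      apply Finset.sum_congr rfl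
      intro k _
      have hrec : legendreLs (m + 1) (k + 1)
          = legendreLs m k - (m : ℚ) * ((m : ℚ) + 1) * legendreLs m (k + 1) := rfl
      rw [hrec]
      have hs1 : (-1 : ℚ) ^ (m + 1 + (k + 1)) = (-1) ^ (m + k) := by
        rw [show m + 1 + (k + 1) = (m + k) + 2 by omega, pow_add]; norm_num
      have hs2 : (-1 : ℚ) ^ (m + (k + 1) + 1) = (-1) ^ (m + k) := by
        rw [show m + (k + 1) + 1 = (m + k) + 2 by omega, pow_add]; norm_num
      rw [hs1, hs2, show n + (k + 1) = n + 1 + k by omega]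
      ring
    rw [step1, hshift]
    have hA' : ∑ k ∈ Finset.range (m + 1),
        (-1 : ℚ) ^ (m + k + 1) * genocchiH (n + k) * legendreLs m k
        = -∑ k ∈ Finset.range (m + 1),
            (-1 : ℚ) ^ (m + k) * legendreLs m k * genocchiH (n + k) := by
      rw [← Finset.sum_neg_distrib]
      apply Finset.sum_congr rfl
      intro k _
      rw [pow_succ]
      ring
    rw [hA']
    have hc : (m : ℚ) * ((m : ℚ) + 1) *
        ((-1 : ℚ) ^ (m + 0 + 1) * genocchiH (n + 0) * legendreLs m 0)
        = ((m : ℚ) + 1) * ((-1 : ℚ) ^ (m + 0 + 1) * genocchiH (n + 0)) *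
            ((m : ℚ) * legendreLs m 0) := by ring
    rw [mul_sub, hc, mul_legendreLs_zero, mul_zero, sub_zero]
    rw [ih (n + 1) (by omega), ih n hn]
    obtain ⟨p, rfl⟩ : ∃ p, n = p + 1 := ⟨n - 1, by omega⟩
    have hF : Ftilde (p + 1 + 1) ((m : ℚ) + 1)
        = ((m : ℚ) + 1) * (((m : ℚ) + 1) + 1) * Ftilde (p + 1) (((m : ℚ) + 1) + 1)
          - (((m : ℚ) + 1) - 1) * ((m : ℚ) + 1) * Ftilde (p + 1) ((m : ℚ) + 1) := rfl
    rw [hF]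
    have e4 : ((m + 1 + 1).factorial : ℚ) = ((m : ℚ) + 2) * ((m + 1).factorial : ℚ) := by
      rw [Nat.factorial_succ]; push_cast; ring
    have e5 : ((m + 1).factorial : ℚ) = ((m : ℚ) + 1) * (m.factorial : ℚ) := by
      rw [Nat.factorial_succ]; push_cast; ring
    have e6 : (((m + 1 : ℕ)) : ℚ) = (m : ℚ) + 1 := by push_cast; ring
    rw [e6, e4, e5]
    ring

theorem genocchiH_double_sum_identity (m n : ℕ) (hn : 1 ≤ n) :
    ∑ j ∈ Finset.range (m + 1), (-1) ^ (m + j) * legendreLs m j * genocchiH (n + j) =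
      (m.factorial : ℚ) *
        ∑ j ∈ Finset.range (n + 1),
          (-1) ^ (n + j) * legendreLS n j * (j.factorial : ℚ) * ((j + m).factorial : ℚ) := by
  rw [S_lemma n hn m, A_lemma m n hn]
  ring
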